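/- arXiv:2102.00393 — 5 statements merged into one kernel-verified Lean document; each statement's English description precedes it below -/
import Mathlib

section
/- Let 1 → K → H → Π → 1 be an extension of groups where K is finite of order N and Π is free abelian of finite rank, and assume the induced adjoint action of Π on K by outer automorphisms is trivial. Let Π_N = {t^N : t ∈ Π} and H_N the preimage of Π_N in H. Then there is a group homomorphism section s : Π_N → H_N of the quotient map whose image commutes elementwise with K; in particular H_N ≅ Π_N × K. -/
/-- Let `1 → K → H → Π → 1` be an extension of groups where `K` is finite of order `N` and
`Π` is free abelian of finite rank, and assume the induced adjoint action of `Π` on `K`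
by outer automorphisms is trivial (i.e. conjugation by any element of `H` restricts to an
inner automorphism of `K`).  Let `Π_N = {t^N : t ∈ Π}` and `H_N` the preimage of `Π_N`
in `H`.  Then there is a group homomorphism section `s : Π_N → H_N` of the quotient map
whose image commutes elementwise with `K`; in particular `H_N ≅ Π_N × K`. -/
theorem stmt_0 {H Λ : Type*} [Group H] [CommGroup Λ]
    (q : H →* Λ) (hq : Function.Surjective q)
    (K : Subgroup H) (hK : K = q.ker) [Finite K]
    (N : ℕ) (hN : Nat.card K = N)
    (hfree : ∃ d : ℕ, Nonempty (Λ ≃* Multiplicative (Fin d → ℤ)))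
    (houter : ∀ h : H, ∃ k ∈ K, ∀ x ∈ K, h * x * h⁻¹ = k * x * k⁻¹)
    (ΛN : Subgroup Λ) (hΛN : ΛN = (powMonoidHom N : Λ →* Λ).range)
    (HN : Subgroup H) (hHN : HN = ΛN.comap q) :
    ∃ s : ΛN →* H,
      (∀ t : ΛN, q (s t) = (t : Λ)) ∧
      (∀ t : ΛN, s t ∈ HN) ∧
      (∀ t : ΛN, ∀ x ∈ K, s t * x = x * s t) ∧
      Nonempty (HN ≃* ΛN × K) := by
  classical
  have hNpos : 0 < N := hN ▸ Nat.card_pos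
  have hball : ∀ x : H, x ∈ K ↔ q x = 1 := by
    intro x; rw [hK]; exact q.mem_ker
  have hKpow : ∀ x ∈ K, x ^ N = 1 := by
    intro x hx
    have h1 : (⟨x, hx⟩ : K) ^ N = 1 := by rw [← hN]; exact pow_card_eq_one'
    have h2 := congrArg (Subtype.val) h1
    simpa using h2
  -- lemma A: sections centralizing K
  have hsec : ∀ l : Λ, ∃ c : H, q c = l ∧ ∀ x ∈ K, c * x = x * c := by
    intro l
    obtain ⟨h, rfl⟩ := hq l
    obtain ⟨k, hkK, hcon⟩ := houter h
    have hqk : q k = 1 := (hball k).1 hkK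
    refine ⟨k⁻¹ * h, by simp [hqk], ?_⟩
    intro x hx
    have h1 : h * x * h⁻¹ = k * x * k⁻¹ := hcon x hx
    have h2 : (k⁻¹ * h) * x * (k⁻¹ * h)⁻¹ = x := by
      rw [mul_inv_rev]
      calc k⁻¹ * h * x * (h⁻¹ * k⁻¹⁻¹) = k⁻¹ * (h * x * h⁻¹) * k := by group
        _ = k⁻¹ * (k * x * k⁻¹) * k := by rw [h1]
        _ = x := by group
    calc (k⁻¹ * h) * x = ((k⁻¹ * h) * x * (k⁻¹ * h)⁻¹) * (k⁻¹ * h) := by group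
      _ = x * (k⁻¹ * h) := by rw [h2]
  choose σ hσq hσc using hsec
  -- lemma B: key commutation
  have key : ∀ a b : H, (∀ x ∈ K, a * x = x * a) → (∀ x ∈ K, b * x = x * b) →
      Commute (a ^ N) b := by
    intro a b ha hb
    set z := a * b * a⁻¹ * b⁻¹ with hz
    have hzK : z ∈ K := by
      rw [hball]
      have h1 : q z = q a * q b * (q a)⁻¹ * (q b)⁻¹ := by simp [hz]
      rw [h1, mul_comm (q a) (q b)]; group
    have hza : Commute a z := ha z hzK
    have hstep : ∀ n : ℕ, a ^ n * b = z ^ n * (b * a ^ n) := by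
      intro n; induction n with
      | zero => simp
      | succ n ih =>
        have hab : a * b = z * (b * a) := by rw [hz]; group
        calc a ^ (n + 1) * b = a * (a ^ n * b) := by rw [pow_succ']; group
          _ = a * (z ^ n * (b * a ^ n)) := by rw [ih]
          _ = (a * z ^ n) * (b * a ^ n) := by rw [mul_assoc]
          _ = (z ^ n * a) * (b * a ^ n) := by rw [(hza.pow_right n).eq]
          _ = z ^ n * ((a * b) * a ^ n) := by group
          _ = z ^ n * ((z * (b * a)) * a ^ n) := by rw [hab]
          _ = z ^ (n + 1) * (b * a ^ (n + 1)) := by rw [pow_succ, pow_succ']; group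
    have h1 := hstep N
    rw [hKpow z hzK, one_mul] at h1
    exact h1
  obtain ⟨d, ⟨ψ⟩⟩ := hfree
  -- injectivity of the N-th power map on Λ
  have hinj : Function.Injective (powMonoidHom N : Λ →* Λ) := by
    intro x y hxy
    simp only [powMonoidHom_apply] at hxy
    have h1 : (x / y) ^ N = 1 := by rw [div_pow, hxy, div_self']
    have h2 : (ψ (x / y)) ^ N = 1 := by rw [← map_pow, h1, map_one]
    have h4 : N • (ψ (x / y)).toAdd = 0 := by
      rw [← toAdd_pow, h2]; rfl
    have h5 : (ψ (x / y)).toAdd = 0 := by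
      funext i
      have h6 : (N : ℤ) * (ψ (x / y)).toAdd i = 0 := by
        have := congrFun h4 i
        simpa [nsmul_eq_mul] using this
      rcases mul_eq_zero.mp h6 with h | h
      · exact absurd (by exact_mod_cast h) hNpos.ne'
      · exact h
    have h7 : ψ (x / y) = 1 := by
      have := congrArg Multiplicative.ofAdd h5
      simpa using this
    have h8 : x / y = 1 := by
      have := congrArg ψ.symm h7
      simpa using this
    exact div_eq_one.mp h8
  let e : Λ ≃* ΛN := (MonoidHom.ofInjective hinj).trans (MulEquiv.subgroupCongr hΛN.symm)
  have hecoe : ∀ u : Λ, ((e u : Λ)) = u ^ N := by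
    intro u
    simp [e, MonoidHom.ofInjective_apply, MulEquiv.subgroupCongr_apply, powMonoidHom_apply]
  have hepow : ∀ t : ΛN, (e.symm t) ^ N = (t : Λ) := by
    intro t
    have h1 := hecoe (e.symm t)
    rw [e.apply_symm_apply] at h1
    exact h1.symm
  -- generators and lifts
  set gen : Fin d → Λ := fun i => ψ.symm (Multiplicative.ofAdd (Pi.single i 1)) with hgen
  set c : Fin d → H := fun i => σ (gen i) with hc
  set ϕ : ∀ _ : Fin d, Multiplicative ℤ →* H := fun i => zpowersHom H ((c i) ^ N) with hϕ
  have hcomm : Pairwise fun i j => ∀ x y : Multiplicative ℤ, Commute (ϕ i x) (ϕ j y) := by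
    intro i j _
    intro x y
    have h1 : Commute ((c i) ^ N) (c j) := key _ _ (hσc _) (hσc _)
    have h2 : Commute ((c i) ^ N) ((c j) ^ N) := h1.pow_right N
    simpa [hϕ, zpowersHom_apply] using h2.zpow_zpow x.toAdd y.toAdd
  set g' : (∀ _ : Fin d, Multiplicative ℤ) →* H := MonoidHom.noncommPiCoprod ϕ hcomm with hg'
  set pe : Multiplicative (Fin d → ℤ) ≃* (∀ _ : Fin d, Multiplicative ℤ) :=
    MulEquiv.piMultiplicative (fun _ : Fin d => ℤ) with hpe
  set s : ΛN →* H :=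
    g'.comp ((pe.toMonoidHom.comp ψ.toMonoidHom).comp e.symm.toMonoidHom) with hs
  -- image of g' centralizes K
  have hcent : ∀ i : Fin d, c i ∈ Subgroup.centralizer (K : Set H) := by
    intro i
    rw [Subgroup.mem_centralizer_iff]
    intro y hy
    exact (hσc _ y hy).symm
  have hgC : ∀ f : ∀ _ : Fin d, Multiplicative ℤ, ∀ x ∈ K, g' f * x = x * g' f := by
    intro f
    have hmem : g' f ∈ Subgroup.centralizer (K : Set H) := by
      have heq : g' f = Finset.univ.noncommProd (fun i => ϕ i (f i))
          (fun _ _ _ _ h => hcomm h _ _) := rfl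
      rw [heq]
      refine Subgroup.noncommProd_mem _ _ ?_
      intro i _
      simp only [hϕ, zpowersHom_apply]
      exact Subgroup.zpow_mem _ (Subgroup.pow_mem _ (hcent i) N) _
    intro x hx
    exact ((Subgroup.mem_centralizer_iff.mp hmem) x hx).symm
  -- q ∘ g' computation
  have hhom : q.comp g' =
      (powMonoidHom N : Λ →* Λ).comp (ψ.symm.toMonoidHom.comp pe.symm.toMonoidHom) := by
    apply MonoidHom.functions_ext
    intro i y
    have hsingle : pe.symm (Pi.mulSingle i y) = Multiplicative.ofAdd (Pi.single i y.toAdd) := by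
      apply Multiplicative.toAdd.injective
      funext j
      rcases eq_or_ne j i with rfl | hji
      · simp [hpe, MulEquiv.piMultiplicative]
      · simp [hpe, MulEquiv.piMultiplicative, Pi.mulSingle_eq_of_ne hji,
          Pi.single_eq_of_ne hji]
    have hL : q (g' (Pi.mulSingle i y)) = ((gen i) ^ y.toAdd) ^ N := by
      rw [hg', MonoidHom.noncommPiCoprod_mulSingle]
      simp only [hϕ, zpowersHom_apply]
      rw [map_zpow, map_pow, hσq]
      rw [← zpow_natCast ((gen i) ^ y.toAdd), ← zpow_natCast (gen i), ← zpow_mul, ← zpow_mul,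
        mul_comm]
    have hR : (gen i) ^ y.toAdd = ψ.symm (Multiplicative.ofAdd (Pi.single i y.toAdd)) := by
      rw [hgen]
      rw [← map_zpow]
      congr 1
      apply Multiplicative.toAdd.injective
      funext j
      rcases eq_or_ne j i with rfl | hji
      · simp [toAdd_zpow]
      · simp [toAdd_zpow, Pi.single_eq_of_ne hji]
    simp only [MonoidHom.comp_apply, MulEquiv.coe_toMonoidHom, powMonoidHom_apply, hsingle]
    rw [hL, hR]
  have hqg : ∀ u : Λ, q (g' (pe (ψ u))) = u ^ N := by
    intro u
    have h1 := DFunLike.congr_fun hhom (pe (ψ u))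
    simpa using h1
  have hqs : ∀ t : ΛN, q (s t) = (t : Λ) := by
    intro t
    have h1 := hqg (e.symm t)
    rw [hepow t] at h1
    exact h1
  have hsHN : ∀ t : ΛN, s t ∈ HN := by
    intro t
    rw [hHN]
    exact Subgroup.mem_comap.mpr (by rw [hqs]; exact t.2)
  have hsK : ∀ t : ΛN, ∀ x ∈ K, s t * x = x * s t := by
    intro t x hx
    exact hgC (pe (ψ (e.symm t))) x hx
  -- the isomorphism
  have hmemHN : ∀ (t : ΛN) (k : H), k ∈ K → s t * k ∈ HN := by
    intro t k hk
    rw [hHN]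
    refine Subgroup.mem_comap.mpr ?_
    rw [map_mul, hqs, (hball k).1 hk, mul_one]
    exact t.2
  let Φ : ΛN × K →* HN :=
    { toFun := fun p => ⟨s p.1 * (p.2 : H), hmemHN p.1 p.2 p.2.2⟩
      map_one' := by
        ext
        simp
      map_mul' := by
        rintro ⟨t, k⟩ ⟨t', k'⟩
        ext
        show s (t * t') * ((k : H) * (k' : H)) = (s t * k) * (s t' * k')
        have hcmm : (k : H) * s t' = s t' * k := (hsK t' k k.2).symm
        calc s (t * t') * ((k : H) * k') = s t * (s t' * ((k : H) * k')) := by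
              rw [map_mul, mul_assoc]
          _ = s t * ((k : H) * (s t' * k')) := by
              rw [← mul_assoc (k : H), hcmm, mul_assoc]
          _ = s t * (k : H) * (s t' * k') := by rw [mul_assoc] }
  have hinjΦ : Function.Injective Φ := by
    intro p p' hpp
    have h1 : s p.1 * (p.2 : H) = s p'.1 * (p'.2 : H) := congrArg Subtype.val hpp
    have h2 : (p.1 : Λ) = p'.1 := by
      have h3 := congrArg q h1
      simpa [map_mul, hqs, (hball _).1 p.2.2, (hball _).1 p'.2.2] using h3
    have h2' : p.1 = p'.1 := Subtype.ext h2
    have h3 : (p.2 : H) = p'.2 := by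
      rw [h2'] at h1
      exact mul_left_cancel h1
    exact Prod.ext h2' (Subtype.ext h3)
  have hsurjΦ : Function.Surjective Φ := by
    rintro ⟨h, hh⟩
    have hqh : q h ∈ ΛN := by rw [hHN] at hh; exact hh
    set t : ΛN := ⟨q h, hqh⟩ with ht
    have hk : (s t)⁻¹ * h ∈ K := by
      rw [hball, map_mul, map_inv, hqs]
      show ((t : Λ))⁻¹ * q h = 1
      rw [ht]
      simp
    refine ⟨(t, ⟨(s t)⁻¹ * h, hk⟩), ?_⟩
    ext
    show s t * ((s t)⁻¹ * h) = h
    simp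
  exact ⟨s, hqs, hsHN, hsK, ⟨(MulEquiv.ofBijective Φ ⟨hinjΦ, hsurjΦ⟩).symm⟩⟩
end

section
/- Let G be a magnetic space group of type (c) (black and white), i.e., ρ_S ≠ 1 and ρ_{ℤ₂} = id. Then exactly one of the following holds: (c-i) Π = Π₀ and P₀ is an index-2 normal subgroup of P, or (c-ii) Π₀ is an index-2 subgroup of Π and P₀ ≅ P. -/
noncomputable section

/-- The `d`-dimensional Euclidean space `V = ℝ^d`. -/
abbrev Euclid (d : ℕ) := EuclideanSpace ℝ (Fin d)

/-- The Euclidean motion group `Euc(V)`, i.e. the isometry group of `V`. -/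
abbrev Euc (d : ℕ) := Euclid d ≃ᵢ Euclid d

/-- The group `ℤ₂` (written multiplicatively). -/
abbrev C2 := Multiplicative (ZMod 2)

/-- An isometry of `V` is a translation if it is of the form `x ↦ x + v`. -/
def IsTranslation {d : ℕ} (e : Euc d) : Prop := ∀ x, e x = x + e 0

/-- A full-rank lattice in `V`: a discrete additive subgroup whose real span is all of `V`. -/
def IsFullLattice {d : ℕ} (L : AddSubgroup (Euclid d)) : Prop :=
  DiscreteTopology L ∧ Submodule.span ℝ (L : Set (Euclid d)) = ⊤

/-- The subgroup of translations in the Euclidean motion group. -/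
def transSubgroup (d : ℕ) : Subgroup (Euc d) where
  carrier := {e | IsTranslation e}
  one_mem' := by intro x; simp
  mul_mem' := by
    intro e f he hf x
    have h1 : (e * f) x = e (f x) := rfl
    have h2 : (e * f) 0 = e (f 0) := rfl
    rw [h1, h2, hf x, he (x + f 0), he (f 0)]
    abel
  inv_mem' := by
    intro e he x
    have key : ∀ y, e⁻¹ y = y - e 0 := by
      intro y
      have : e (y - e 0) = y := by rw [he (y - e 0)]; abel
      calc e⁻¹ y = e⁻¹ (e (y - e 0)) := by rw [this]
        _ = y - e 0 := e.symm_apply_apply _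
    have h0 : e⁻¹ (0 : Euclid d) = -e 0 := by rw [key 0]; abel
    show e⁻¹ x = x + e⁻¹ 0
    rw [key x, h0]; abel

/-- The lattice of translation vectors contained in a subgroup `S ⊆ Euc(V)`. -/
def transLat {d : ℕ} (S : Subgroup (Euc d)) : AddSubgroup (Euclid d) where
  carrier := {v | ∃ e ∈ S, IsTranslation e ∧ e 0 = v}
  zero_mem' := ⟨1, S.one_mem, (transSubgroup d).one_mem, by simp⟩
  add_mem' := by
    rintro a b ⟨e, heS, he, rfl⟩ ⟨f, hfS, hf, rfl⟩
    refine ⟨e * f, S.mul_mem heS hfS, (transSubgroup d).mul_mem he hf, ?_⟩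
    show e (f 0) = e 0 + f 0
    rw [hf 0, he (0 + f 0)]; abel
  neg_mem' := by
    rintro a ⟨e, heS, he, rfl⟩
    refine ⟨e⁻¹, S.inv_mem heS, (transSubgroup d).inv_mem he, ?_⟩
    have h1 : e (e⁻¹ 0) = (e⁻¹ 0) + e 0 := he (e⁻¹ 0)
    have h2 : e (e⁻¹ 0) = 0 := e.apply_symm_apply 0
    have h3 : (0 : Euclid d) = e⁻¹ 0 + e 0 := by rw [← h1, h2]
    show e⁻¹ 0 = -(e 0)
    have := congrArg (fun y => y - e 0) h3
    simpa using this.symm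

/-- The lattice of translation vectors `Π = G ∩ (ℝ^d × {1})` of a subgroup
`G ⊆ Euc(V) × ℤ₂`. -/
def magLat {d : ℕ} (G : Subgroup (Euc d × C2)) : AddSubgroup (Euclid d) :=
  transLat (G.comap (MonoidHom.inl (Euc d) C2))

/-- A crystallographic space group: `S ∩ ℝ^d` is a full-rank lattice of translations and
the point group `S/(S ∩ ℝ^d)` is finite. -/
def IsSpaceGroup {d : ℕ} (S : Subgroup (Euc d)) : Prop :=
  IsFullLattice (transLat S) ∧ (transSubgroup d).relIndex S ≠ 0

/-- A magnetic space group: `Π = G ∩ (ℝ^d × {1})` is a full-rank lattice of translations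
and the magnetic point group `P = G/Π` is finite. -/
def IsMagneticSpaceGroup {d : ℕ} (G : Subgroup (Euc d × C2)) : Prop :=
  IsFullLattice (magLat G) ∧ ((transSubgroup d).prod ⊥).relIndex G ≠ 0


/-- The subgroup of translations of a space group `S`, as a subgroup of `S`. -/
def TS {d : ℕ} (S : Subgroup (Euc d)) : Subgroup S :=
  Subgroup.comap S.subtype (transSubgroup d)

/-!
Since `ℤ₂` has prime order, every subgroup `T` of `S` is either contained in `ker ρ_S` or
mapped onto `ℤ₂`; in particular `S₀ = ker ρ_S` has index 2. Apply this to `T = Π`. If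
`Π ≤ S₀` we are in case (c-i), as `P₀ = S₀/Π` has the index of `S₀`. Otherwise
`Π₀ = Π ∩ S₀` has index 2 in `Π`, and `Π S₀ = ρ_S⁻¹(ρ_S(Π)) = S`, i.e. `P₀ = P`: case (c-ii).
-/

lemma card_c2 : Nat.card C2 = 2 := by
  simp [Nat.card_eq_fintype_card]

namespace MonoidHom

variable {S : Type*} [Group S] (ρ : S →* C2)

lemma map_eq_top_of_not_le_ker {T : Subgroup S} (hT : ¬ T ≤ ρ.ker) : T.map ρ = ⊤ := by
  have : Fact (Nat.card C2).Prime := ⟨card_c2 ▸ Nat.prime_two⟩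
  exact (T.map ρ).eq_bot_or_eq_top_of_prime_card.resolve_left (by rwa [Subgroup.map_eq_bot_iff])

lemma relIndex_ker_eq_two {T : Subgroup S} (hT : ¬ T ≤ ρ.ker) : ρ.ker.relIndex T = 2 := by
  rw [Subgroup.relIndex_ker, ρ.map_eq_top_of_not_le_ker hT, Subgroup.card_top, card_c2]

lemma index_ker_eq_two (hρ : ρ ≠ 1) : ρ.ker.index = 2 := by
  rw [← Subgroup.relIndex_top_right]
  exact ρ.relIndex_ker_eq_two fun h => hρ (ρ.ker_eq_top_iff.mp (top_le_iff.mp h))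

lemma sup_ker_eq_top {T : Subgroup S} (hT : ¬ T ≤ ρ.ker) : T ⊔ ρ.ker = ⊤ := by
  rw [← Subgroup.comap_map_eq, ρ.map_eq_top_of_not_le_ker hT, Subgroup.comap_top]

lemma map_ker_mk'_eq_top {N : Subgroup S} [N.Normal] (hN : ¬ N ≤ ρ.ker) :
    ρ.ker.map (QuotientGroup.mk' N) = ⊤ := by
  have hsup : (N ⊔ ρ.ker).map (QuotientGroup.mk' N) = ⊤ := by
    rw [ρ.sup_ker_eq_top hN, Subgroup.map_top_of_surjective _ (QuotientGroup.mk'_surjective N)]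
  rwa [Subgroup.map_sup, (Subgroup.map_eq_bot_iff _).mpr (QuotientGroup.ker_mk' N).ge,
    bot_sup_eq] at hsup

end MonoidHom

theorem stmt_3_general {d : ℕ} (S : Subgroup (Euc d))
    [hn : (TS S).Normal]
    (ρS : S →* C2) (hρ : ρS ≠ 1) :
    Xor'
      ((TS S ≤ ρS.ker) ∧
        ((ρS.ker.map (QuotientGroup.mk' (TS S))).Normal ∧
          (ρS.ker.map (QuotientGroup.mk' (TS S))).index = 2))
      ((ρS.ker.relIndex (TS S) = 2) ∧
        ρS.ker.map (QuotientGroup.mk' (TS S)) = ⊤) := by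
  by_cases hle : TS S ≤ ρS.ker
  · have hidx : (ρS.ker.map (QuotientGroup.mk' (TS S))).index = 2 := by
      rw [Subgroup.index_map_eq _ (QuotientGroup.mk'_surjective _) (by rwa [QuotientGroup.ker_mk']),
        ρS.index_ker_eq_two hρ]
    refine Or.inl ⟨⟨hle, ρS.normal_ker.map _ (QuotientGroup.mk'_surjective _), hidx⟩, ?_⟩
    rintro ⟨-, htop⟩
    rw [htop, Subgroup.index_top] at hidx
    exact absurd hidx (by norm_num)
  · exact Or.inr ⟨⟨ρS.relIndex_ker_eq_two hle, ρS.map_ker_mk'_eq_top hle⟩, fun h => hle h.1⟩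

/-- Let `G` be a magnetic space group of type (c) (black and white),
i.e. `G = {(s, ρ_S(s)) : s ∈ S}` for a nontrivial homomorphism `ρ_S : S → ℤ₂` of a space
group `S`.  Then exactly one of the following holds:
(c-i)  `Π = Π₀` (i.e. `ρ_S` is trivial on translations) and `P₀ = S₀/Π` is an index-2
normal subgroup of the point group `P = S/Π`; or
(c-ii) `Π₀` is an index-2 subgroup of `Π` and the natural map `P₀ → P` is an isomorphism
(i.e. the image of `S₀ = ker ρ_S` in `P` is everything). -/
theorem stmt_3 {d : ℕ} (S : Subgroup (Euc d)) (hS : IsSpaceGroup S)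
    [hn : (TS S).Normal]
    (ρS : S →* C2) (hρ : ρS ≠ 1)
    (G : Subgroup (Euc d × C2))
    (hG : ∀ x : Euc d × C2, x ∈ G ↔ ∃ s : S, x = ((s : Euc d), ρS s)) :
    Xor'
      ((TS S ≤ ρS.ker) ∧
        ((ρS.ker.map (QuotientGroup.mk' (TS S))).Normal ∧
          (ρS.ker.map (QuotientGroup.mk' (TS S))).index = 2))
      ((ρS.ker.relIndex (TS S) = 2) ∧
        ρS.ker.map (QuotientGroup.mk' (TS S)) = ⊤) :=
  stmt_3_general S (hn := hn) ρS hρ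
end
end

section
/- For a given space group S with point group P₀, the set of black and white magnetic space groups G of type (c-i) whose associated space group is S is in one-to-one correspondence with the set of nonzero elements of H¹(P₀; ℤ₂) = Hom(P₀, ℤ₂) \ {0}: namely, each nontrivial homomorphism ρ_P : P₀ → ℤ₂ determines G := ker(ρ_S · pr_{ℤ₂}) where ρ_S is the composite S → P₀ → ℤ₂, and this correspondence is bijective. -/
noncomputable section

/-- A black and white magnetic space group of type (c-i) with associated space group `S`:
a subgroup `G ⊆ S × ℤ₂` projecting onto `S`, containing `Π_S × {1}`, with nontrivial
time-reversal indicator, injective first projection (`ρ_{ℤ₂} = id`), and with the same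
translation lattice as `S` (every translation in `G` is time-preserving). -/
def IsTypeCi {d : ℕ} (S : Subgroup (Euc d)) (G : Subgroup (Euc d × C2)) : Prop :=
  (G.map (MonoidHom.fst (Euc d) C2) = S) ∧
  (∀ e : Euc d, e ∈ S → IsTranslation e → ((e, (1 : C2)) ∈ G)) ∧
  (∃ g ∈ G, (g : Euc d × C2).2 ≠ 1) ∧
  (((1 : Euc d), (Multiplicative.ofAdd (1 : ZMod 2))) ∉ G) ∧
  (∀ (e : Euc d) (u : C2), IsTranslation e → (e, u) ∈ G → u = 1)

/-! A subgroup `G ≤ E × K` that projects onto `S ≤ E` and meets `1 × K` trivially is the graph of a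
unique homomorphism `σ : S →* K`. For a group of type (c-i) the flipped identity `(1, -1)` is not
in `G`, which is the trivial intersection for `K = ℤ₂`; translations are time-preserving, so `σ`
kills `Π_S` and factors through the point group; and some element reverses time, so the factored
homomorphism is nontrivial. Conversely every such graph has these properties. -/

open Function

namespace Subgroup

variable {E K : Type*} [Group E] [Group K] {S : Subgroup E}

variable (S) in
def graphOn (σ : S →* K) : Subgroup (E × K) := (S.subtype.prod σ).range

theorem mem_graphOn {σ : S →* K} {x : E × K} : x ∈ S.graphOn σ ↔ ∃ s : S, x = ((s : E), σ s) :=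
  exists_congr fun _ => eq_comm

theorem mk_mem_graphOn {σ : S →* K} (s : S) : ((s : E), σ s) ∈ S.graphOn σ := ⟨s, rfl⟩

theorem apply_eq_of_mk_mem_graphOn {σ : S →* K} {s : S} {k : K}
    (h : ((s : E), k) ∈ S.graphOn σ) : σ s = k := by
  obtain ⟨t, ht⟩ := h
  obtain ⟨hts, rfl⟩ := Prod.mk.inj ht
  rw [Subtype.ext hts]

theorem graphOn_injective : Injective (S.graphOn (K := K)) := fun _ _ h =>
  MonoidHom.ext fun s => (apply_eq_of_mk_mem_graphOn (h ▸ mk_mem_graphOn s)).symm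

theorem map_fst_graphOn (σ : S →* K) : (S.graphOn σ).map (MonoidHom.fst E K) = S := by
  rw [graphOn, MonoidHom.map_range, MonoidHom.fst_comp_prod, range_subtype]

theorem exists_eq_graphOn {G : Subgroup (E × K)} (hfst : G.map (MonoidHom.fst E K) = S)
    (hker : ∀ k : K, ((1 : E), k) ∈ G → k = 1) : ∃ σ : S →* K, G = S.graphOn σ := by
  -- pulled back to `S × K`, `G` passes the vertical line test `Subgroup.exists_eq_graph`
  set G' := G.comap (S.subtype.prodMap (MonoidHom.id K))
  have hbij : Bijective (Prod.fst ∘ G'.subtype) := by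
    refine ⟨(injective_iff_map_eq_one ((MonoidHom.fst S K).comp G'.subtype)).mpr ?_, ?_⟩
    · rintro ⟨⟨s, k⟩, hx⟩ hs
      obtain rfl : s = 1 := hs
      obtain rfl : k = 1 := hker k hx
      rfl
    · intro s
      obtain ⟨g, hg, hgs⟩ := (hfst.symm ▸ s.2 : (s : E) ∈ G.map (MonoidHom.fst E K))
      exact ⟨⟨(s, g.2), by simpa [G', ← hgs] using hg⟩, rfl⟩
  obtain ⟨σ, hσ⟩ := exists_eq_graph hbij
  refine ⟨σ, le_antisymm (fun x hx => ?_) ?_⟩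
  · have hx1 : x.1 ∈ S := hfst ▸ mem_map_of_mem _ hx
    have : ((⟨x.1, hx1⟩ : S), x.2) ∈ σ.graph := hσ ▸ hx
    exact mem_graphOn.mpr ⟨⟨x.1, hx1⟩, Prod.ext rfl (MonoidHom.mem_graph.mp this).symm⟩
  · rintro _ ⟨s, rfl⟩
    exact (hσ ▸ MonoidHom.mem_graph.mpr rfl : (s, σ s) ∈ G')

end Subgroup

theorem C2.eq_one_or_eq_ofAdd_one (u : C2) : u = 1 ∨ u = Multiplicative.ofAdd (1 : ZMod 2) := by
  revert u; decide

section TypeCi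

variable {d : ℕ} {S : Subgroup (Euc d)} [(TS S).Normal]

theorem isTypeCi_graphOn_comp_mk' {ρ : (S ⧸ TS S) →* C2} (hρ : ρ ≠ 1) :
    IsTypeCi S (S.graphOn (ρ.comp (QuotientGroup.mk' (TS S)))) := by
  have htrans : ∀ s : S, IsTranslation (s : Euc d) → ρ (QuotientGroup.mk s) = 1 := fun s hs => by
    rw [(QuotientGroup.eq_one_iff s).mpr hs, map_one]
  refine ⟨Subgroup.map_fst_graphOn _, fun e he hte => ?_, ?_, fun h => ?_, fun e u hte hu => ?_⟩
  · exact Subgroup.mem_graphOn.mpr ⟨⟨e, he⟩, by rw [MonoidHom.comp_apply, QuotientGroup.mk'_apply,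
      htrans ⟨e, he⟩ hte]⟩
  · obtain ⟨q, hq⟩ := DFunLike.ne_iff.mp hρ
    obtain ⟨s, rfl⟩ := QuotientGroup.mk_surjective q
    exact ⟨_, Subgroup.mk_mem_graphOn s, hq⟩
  · have := Subgroup.apply_eq_of_mk_mem_graphOn (s := 1) h
    rw [map_one] at this
    exact absurd this (by decide)
  · obtain ⟨s, hs⟩ := Subgroup.mem_graphOn.mp hu
    obtain ⟨rfl, rfl⟩ := Prod.mk.inj hs
    exact htrans s hte

theorem IsTypeCi.exists_eq_graphOn_comp_mk' {G : Subgroup (Euc d × C2)} (hG : IsTypeCi S G) :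
    ∃ ρ : (S ⧸ TS S) →* C2, ρ ≠ 1 ∧ G = S.graphOn (ρ.comp (QuotientGroup.mk' (TS S))) := by
  obtain ⟨hfst, -, ⟨g, hg, hg2⟩, hflip, htrans⟩ := hG
  have hker : ∀ u : C2, ((1 : Euc d), u) ∈ G → u = 1 := fun u hu =>
    (C2.eq_one_or_eq_ofAdd_one u).resolve_right (by rintro rfl; exact hflip hu)
  obtain ⟨σ, rfl⟩ := Subgroup.exists_eq_graphOn hfst hker
  have hσ : TS S ≤ σ.ker := fun s hs => htrans s (σ s) hs (Subgroup.mk_mem_graphOn s)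
  refine ⟨QuotientGroup.lift _ σ hσ, fun h => ?_, by rw [QuotientGroup.lift_comp_mk']⟩
  obtain ⟨s, rfl⟩ := Subgroup.mem_graphOn.mp hg
  exact hg2 (DFunLike.congr_fun h (QuotientGroup.mk s))

end TypeCi

theorem stmt_4_general {d : ℕ} (S : Subgroup (Euc d))
    [hn : (TS S).Normal] :
    ∃ F : {ρP : (S ⧸ TS S) →* C2 // ρP ≠ 1} ≃
          {G : Subgroup (Euc d × C2) // IsTypeCi S G},
      ∀ (ρP : {ρP : (S ⧸ TS S) →* C2 // ρP ≠ 1}) (x : Euc d × C2),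
        x ∈ (F ρP : Subgroup (Euc d × C2)) ↔
          ∃ s : S, x = ((s : Euc d), (ρP : (S ⧸ TS S) →* C2) (QuotientGroup.mk s)) := by
  let graph (ρ : {ρP : (S ⧸ TS S) →* C2 // ρP ≠ 1}) : {G // IsTypeCi S G} :=
    ⟨S.graphOn (ρ.1.comp (QuotientGroup.mk' _)), isTypeCi_graphOn_comp_mk' ρ.2⟩
  have hinj : Injective graph := fun ρ τ h => Subtype.ext <|
    (MonoidHom.cancel_right (QuotientGroup.mk'_surjective _)).mp <|
      Subgroup.graphOn_injective (congrArg Subtype.val h)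
  have hsurj : Surjective graph := fun G =>
    let ⟨ρ, hρ, hG⟩ := G.2.exists_eq_graphOn_comp_mk'
    ⟨⟨ρ, hρ⟩, Subtype.ext hG.symm⟩
  exact ⟨Equiv.ofBijective graph ⟨hinj, hsurj⟩, fun _ _ => Subgroup.mem_graphOn⟩

/-- For a given space group `S` with point group `P₀ = S/Π_S`,
the set of black and white magnetic space groups of type (c-i) with associated space
group `S` is in one-to-one correspondence with `Hom(P₀, ℤ₂) \ {0}`: each nontrivial
homomorphism `ρ_P : P₀ → ℤ₂` determines `G = {(s, ρ_P(sΠ_S)) : s ∈ S}`, and this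
correspondence is bijective. -/
theorem stmt_4 {d : ℕ} (S : Subgroup (Euc d)) (hS : IsSpaceGroup S)
    [hn : (TS S).Normal] :
    ∃ F : {ρP : (S ⧸ TS S) →* C2 // ρP ≠ 1} ≃
          {G : Subgroup (Euc d × C2) // IsTypeCi S G},
      ∀ (ρP : {ρP : (S ⧸ TS S) →* C2 // ρP ≠ 1}) (x : Euc d × C2),
        x ∈ (F ρP : Subgroup (Euc d × C2)) ↔
          ∃ s : S, x = ((s : Euc d), (ρP : (S ⧸ TS S) →* C2) (QuotientGroup.mk s)) :=
  stmt_4_general S (hn := hn)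
end
end

section
/- Fix φ : P → ℤ₂ and a P-space X. On the set H¹_P(X; ℤ₂) × H²_P(X; φ𝕋), define (c, σ) + (c', σ') := (c + c', σ + σ' + ε(c, c')) where ε(c, c')(p, q, x) = (−1)^{c'(p,x)·c(q,x)}. Then ε(c, c') is a 2-cocycle, and this addition is associative and has (0,0) as identity element, so that the set of twists forms a monoid (indeed a group). -/
/-- The element `-1` of the circle group `𝕋`. -/
noncomputable def negOne : Circle :=
  ⟨-1, by simp [Submonoid.unitSphere, mem_sphere_zero_iff_norm]⟩

/-- `(-1)^a ∈ 𝕋` for `a : ℤ₂`. -/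
noncomputable def signChar (a : ZMod 2) : Circle := if a = 0 then 1 else negOne

/-!
`ε(c, c')` is the sign of the cup product `c' ∪ c`; the cup product of two additive
maps `P → ℤ₂` is a 2-cocycle, and since `tw p` is a group automorphism of `𝕋` fixing `±1`,
the sign of a 2-cocycle is a twisted 2-cocycle. Associativity holds on the nose because
`ε` is biadditive: both sides carry the sign of `c' p c q + c'' p c q + c'' p c' q`.
Twisted 2-cocycles form a group, and `c + c = 0` in `ℤ₂`, so `(c, σ⁻¹ ε(c, c)⁻¹)` is
inverse to `(c, σ)`.
-/

lemma negOne_mul_negOne : negOne * negOne = 1 := by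
  ext
  rw [Circle.coe_mul]
  show (-1 : ℂ) * (-1) = ((1 : Circle) : ℂ)
  simp

lemma signChar_zero : signChar 0 = 1 := if_pos rfl

lemma signChar_add (a b : ZMod 2) : signChar (a + b) = signChar a * signChar b := by
  have h : ∀ x : ZMod 2, x = 0 ∨ x = 1 := by decide
  rcases h a with rfl | rfl <;> rcases h b with rfl | rfl <;>
    simp [signChar, negOne_mul_negOne, (by decide : (1 + 1 : ZMod 2) = 0)]

lemma signChar_inv (a : ZMod 2) : (signChar a)⁻¹ = signChar a := by
  refine inv_eq_of_mul_eq_one_right ?_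
  rw [← signChar_add, CharTwo.add_self_eq_zero, signChar_zero]

lemma ite_inv_mul {G : Type*} [CommGroup G] (b : Prop) [Decidable b] (z w : G) :
    (if b then z * w else (z * w)⁻¹) = (if b then z else z⁻¹) * (if b then w else w⁻¹) := by
  split_ifs <;> simp [mul_comm]

section TwistedCocycle

variable {P X G : Type*} [Group P] [MulAction P X] [CommGroup G]

/-- Groupoid 2-cocycles of the action groupoid `P ⋉ X` with coefficients in `G`, on which
`P` acts through `tw`. -/
def IsTwistedCocycle (tw : P → G → G) (σ : P → P → X → G) : Prop :=
  ∀ (p q r : P) (x : X), σ p q (r • x) * σ (p * q) r x = tw p (σ q r x) * σ p (q * r) x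

variable {tw : P → G → G} {σ τ : P → P → X → G}

theorem IsTwistedCocycle.mul (htw : ∀ p z w, tw p (z * w) = tw p z * tw p w)
    (hσ : IsTwistedCocycle tw σ) (hτ : IsTwistedCocycle tw τ) :
    IsTwistedCocycle tw (σ * τ) := by
  intro p q r x
  simp only [Pi.mul_apply, htw]
  rw [mul_mul_mul_comm, hσ, hτ, mul_mul_mul_comm]

theorem IsTwistedCocycle.inv (htw : ∀ p z w, tw p (z * w) = tw p z * tw p w)
    (hσ : IsTwistedCocycle tw σ) : IsTwistedCocycle tw σ⁻¹ := by
  intro p q r x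
  have htw_inv : tw p (σ q r x)⁻¹ = (tw p (σ q r x))⁻¹ :=
    map_inv (MonoidHom.mk' (tw p) (htw p)) _
  simp only [Pi.inv_apply, htw_inv, ← mul_inv, hσ p q r x]

end TwistedCocycle

theorem isTwistedCocycle_signChar {P X : Type*} [Group P] [MulAction P X]
    {tw : P → Circle → Circle} (htw : ∀ p a, tw p (signChar a) = signChar a)
    {c c' : P → ZMod 2} (hc : ∀ p q, c (p * q) = c p + c q)
    (hc' : ∀ p q, c' (p * q) = c' p + c' q) :
    IsTwistedCocycle tw (fun p q (_ : X) => signChar (c' p * c q)) := by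
  intro p q r x
  simp only [htw, hc, hc', ← signChar_add]
  congr 1
  ring

lemma signChar_correction_assoc (a' a'' b b' : ZMod 2) :
    signChar (a' * b) * signChar (a'' * (b + b'))
      = signChar (a'' * b') * signChar ((a' + a'') * b) := by
  simp only [← signChar_add]
  congr 1
  ring

theorem stmt_6_general {P X : Type*} [Group P] [MulAction P X]
    (φ : P → ZMod 2)
    -- the φ-twisted action of `P` on the coefficients `𝕋`
    (tw : P → Circle → Circle) (htw : ∀ p z, tw p z = if φ p = 0 then z else z⁻¹)
    -- 1-cocycles (pulled back from `P`) and φ-twisted groupoid 2-cocycles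
    (Coc1 : (P → ZMod 2) → Prop)
    (hCoc1 : ∀ c, Coc1 c ↔ ∀ p q : P, c (p * q) = c p + c q)
    (Coc2 : (P → P → X → Circle) → Prop)
    (hCoc2 : ∀ σ, Coc2 σ ↔ ∀ (p q r : P) (x : X),
      σ p q (r • x) * σ (p * q) r x = tw p (σ q r x) * σ p (q * r) x)
    -- the correction cocycle ε
    (ε : (P → ZMod 2) → (P → ZMod 2) → P → P → X → Circle)
    (hε : ∀ c c' p q x, ε c c' p q x = signChar (c' p * c q)) :
    -- (1) ε(c,c') is a 2-cocycle
    (∀ c c', Coc1 c → Coc1 c' → Coc2 (ε c c')) ∧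
    -- (2) the sum is associative (strictly, at the level of cocycles)
    (∀ c c' c'', Coc1 c → Coc1 c' → Coc1 c'' →
      ((c + c') + c'' = c + (c' + c'')) ∧
      ∀ (σ σ' σ'' : P → P → X → Circle) (p q : P) (x : X),
        (σ p q x * σ' p q x * ε c c' p q x) * σ'' p q x * ε (c + c') c'' p q x
          = σ p q x * (σ' p q x * σ'' p q x * ε c' c'' p q x) * ε c (c' + c'') p q x) ∧
    -- (3) (0, 1) is an identity element
    (∀ (c : P → ZMod 2) (σ : P → P → X → Circle) (p q : P) (x : X),
      (σ p q x * 1 * ε c 0 p q x = σ p q x) ∧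
      (1 * σ p q x * ε 0 c p q x = σ p q x)) ∧
    -- (4) inverses exist, so the twists form a group
    (∀ c σ, Coc1 c → Coc2 σ → ∃ c' σ', Coc1 c' ∧ Coc2 σ' ∧ c + c' = 0 ∧
      ∀ (p q : P) (x : X), σ p q x * σ' p q x * ε c c' p q x = 1) := by
  have hε_eq : ∀ c c', ε c c' = fun p q _ => signChar (c' p * c q) := fun c c' => by
    funext p q x; exact hε c c' p q x
  have htw_mul : ∀ p z w, tw p (z * w) = tw p z * tw p w := fun p z w => by
    simp only [htw, ite_inv_mul]
  have htw_sign : ∀ p a, tw p (signChar a) = signChar a := fun p a => by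
    rw [htw, signChar_inv, ite_self]
  have hε_cocycle : ∀ c c', Coc1 c → Coc1 c' → Coc2 (ε c c') := fun c c' hc hc' => by
    rw [hCoc2, hε_eq]
    exact isTwistedCocycle_signChar htw_sign ((hCoc1 c).1 hc) ((hCoc1 c').1 hc')
  refine ⟨hε_cocycle, fun c c' c'' _ _ _ => ⟨add_assoc c c' c'', ?_⟩, ?_, ?_⟩
  · intro σ σ' σ'' p q x
    simp only [hε, Pi.add_apply]
    calc _ = σ p q x * σ' p q x * σ'' p q x *
            (signChar (c' p * c q) * signChar (c'' p * (c q + c' q))) := by ac_rfl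
      _ = σ p q x * σ' p q x * σ'' p q x *
            (signChar (c'' p * c' q) * signChar ((c' p + c'' p) * c q)) := by
          rw [signChar_correction_assoc]
      _ = _ := by ac_rfl
  · intro c σ p q x
    simp [hε, signChar_zero]
  · intro c σ hc hσ
    refine ⟨c, σ⁻¹ * (ε c c)⁻¹, hc, ?_, funext fun p => CharTwo.add_self_eq_zero _, ?_⟩
    · have hσ' : IsTwistedCocycle tw σ := (hCoc2 σ).1 hσ
      have hεcc : IsTwistedCocycle tw (ε c c) := (hCoc2 _).1 (hε_cocycle c c hc hc)
      exact (hCoc2 _).2 ((hσ'.inv htw_mul).mul htw_mul (hεcc.inv htw_mul))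
    · intro p q x
      simp

/-- Fix `φ : P → ℤ₂` and a `P`-space `X`.  On pairs `(c, σ)` consisting of a `1`-cocycle
`c ∈ H¹_P(X; ℤ₂)` (pulled back from `P`) and a `φ`-twisted `2`-cocycle
`σ ∈ H²_P(X; φ𝕋)`, define `(c, σ) + (c', σ') := (c + c', σ·σ'·ε(c, c'))` where
`ε(c, c')(p, q, x) = (−1)^{c'(p)·c(q)}`.  Then `ε(c, c')` is again a (φ-twisted)
`2`-cocycle, the addition is associative with identity `(0, 1)`, and inverses exist,
so the set of twists forms a monoid (indeed a group). -/
theorem stmt_6 {P X : Type*} [Group P] [Finite P] [MulAction P X]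
    (φ : P → ZMod 2) (hφ : ∀ p q : P, φ (p * q) = φ p + φ q)
    -- the φ-twisted action of `P` on the coefficients `𝕋`
    (tw : P → Circle → Circle) (htw : ∀ p z, tw p z = if φ p = 0 then z else z⁻¹)
    -- 1-cocycles (pulled back from `P`) and φ-twisted groupoid 2-cocycles
    (Coc1 : (P → ZMod 2) → Prop)
    (hCoc1 : ∀ c, Coc1 c ↔ ∀ p q : P, c (p * q) = c p + c q)
    (Coc2 : (P → P → X → Circle) → Prop)
    (hCoc2 : ∀ σ, Coc2 σ ↔ ∀ (p q r : P) (x : X),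
      σ p q (r • x) * σ (p * q) r x = tw p (σ q r x) * σ p (q * r) x)
    -- the correction cocycle ε
    (ε : (P → ZMod 2) → (P → ZMod 2) → P → P → X → Circle)
    (hε : ∀ c c' p q x, ε c c' p q x = signChar (c' p * c q)) :
    -- (1) ε(c,c') is a 2-cocycle
    (∀ c c', Coc1 c → Coc1 c' → Coc2 (ε c c')) ∧
    -- (2) the sum is associative (strictly, at the level of cocycles)
    (∀ c c' c'', Coc1 c → Coc1 c' → Coc1 c'' →
      ((c + c') + c'' = c + (c' + c'')) ∧
      ∀ (σ σ' σ'' : P → P → X → Circle) (p q : P) (x : X),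
        (σ p q x * σ' p q x * ε c c' p q x) * σ'' p q x * ε (c + c') c'' p q x
          = σ p q x * (σ' p q x * σ'' p q x * ε c' c'' p q x) * ε c (c' + c'') p q x) ∧
    -- (3) (0, 1) is an identity element
    (∀ (c : P → ZMod 2) (σ : P → P → X → Circle) (p q : P) (x : X),
      (σ p q x * 1 * ε c 0 p q x = σ p q x) ∧
      (1 * σ p q x * ε 0 c p q x = σ p q x)) ∧
    -- (4) inverses exist, so the twists form a group
    (∀ c σ, Coc1 c → Coc2 σ → ∃ c' σ', Coc1 c' ∧ Coc2 σ' ∧ c + c' = 0 ∧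
      ∀ (p q : P) (x : X), σ p q x * σ' p q x * ε c c' p q x = 1) :=
  stmt_6_general φ tw htw Coc1 hCoc1 Coc2 hCoc2 ε hε
end

section
/- The Poincaré line bundle 𝒫 := (V × Π̂ × ℂ)/∼, where (v, χ, z) ∼ (v + t, χ, conj(χ(t))·z) for t ∈ Π, is a well-defined complex line bundle over (V/Π) × Π̂, and the φ-twisted G-action g·[v, χ, z] = [g·v, χ, z^{φ(g)}] (applying complex conjugation to z when φ(g) = 1) descends to give the structure of a (φ, 0, π̂*σ)-twisted P-equivariant line bundle: in particular, the action of t ∈ Π on 𝒫 is multiplication by the function σ_t(χ) = χ(t). -/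
noncomputable section

/-- The `φ`-twisted action of `g ∈ G` on `Π̂ = Hom(Π, 𝕋)` (cf. Statement 7). -/
def rhoHat {G : Type*} [Group G] (Λ : Subgroup G) [hn : Λ.Normal]
    (φ : G → ZMod 2) (g : G) (χ : Λ →* Circle) : Λ →* Circle :=
  if φ g = 0 then χ.comp (MulAut.conjNormal g⁻¹).toMonoidHom
  else (χ.comp (MulAut.conjNormal g⁻¹).toMonoidHom)⁻¹

variable {G V : Type*} [Group G] [AddCommGroup V] [MulAction G V]
  (Λ : Subgroup G) [hn : Λ.Normal] (τ : Λ → V) (φ : G → ZMod 2)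

/-- The defining relation of the Poincaré line bundle
`𝒫 = (V × Π̂ × ℂ)/{(v, χ, z) ∼ (v + t, χ, conj(χ(t))·z)}`. -/
def PoincareRel (x y : V × (Λ →* Circle) × ℂ) : Prop :=
  ∃ t : Λ, y.1 = x.1 + τ t ∧ y.2.1 = x.2.1 ∧
    y.2.2 = (starRingEnd ℂ) ((x.2.1 t : ℂ)) * x.2.2

/-- The `φ`-twisted `G`-action on `V × Π̂ × ℂ`:
`g · (v, χ, z) = (g·v, ρ_g χ, z^{φ(g)})` (complex conjugation applied to `z` when
`φ(g) = 1`). -/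
def PoincareAct (g : G) (x : V × (Λ →* Circle) × ℂ) : V × (Λ →* Circle) × ℂ :=
  (g • x.1, rhoHat Λ φ g x.2.1, if φ g = 0 then x.2.2 else (starRingEnd ℂ) x.2.2)

/-- The Poincaré line bundle `𝒫 := (V × Π̂ × ℂ)/∼`, where
`(v, χ, z) ∼ (v + t, χ, conj(χ(t))·z)` for `t ∈ Π`, is well defined (the relation is an
equivalence relation), the `φ`-twisted `G`-action descends to the quotient, giving `𝒫`
the structure of a `(φ, 0, π̂*σ)`-twisted `P`-equivariant line bundle; in particular the
action of `t ∈ Π` on `𝒫` is multiplication by the function `σ_t(χ) = χ(t)`. -/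
theorem stmt_13
    (habel : ∀ a b : Λ, a * b = b * a)
    (hτ : ∀ s t : Λ, τ (s * t) = τ s + τ t)
    (hact : ∀ (t : Λ) (v : V), (t : G) • v = v + τ t)
    (hφ : ∀ g h : G, φ (g * h) = φ g + φ h)
    (hφΛ : ∀ t : Λ, φ (t : G) = 0) :
    -- the relation defining `𝒫` is an equivalence relation
    Equivalence (PoincareRel Λ τ) ∧
    -- the twisted `G`-action descends to the quotient `𝒫`
    (∀ (g : G) (x y : V × (Λ →* Circle) × ℂ),
      PoincareRel Λ τ x y → PoincareRel Λ τ (PoincareAct Λ φ g x) (PoincareAct Λ φ g y)) ∧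
    -- `t ∈ Π` acts on `𝒫` by multiplication by `σ_t(χ) = χ(t)`:
    -- `t · [v, χ, z] = [v + t, χ, z] = [v, χ, χ(t)·z]`
    (∀ (t : Λ) (v : V) (χ : Λ →* Circle) (z : ℂ),
      PoincareRel Λ τ (v, χ, (χ t : ℂ) * z) (PoincareAct Λ φ (t : G) (v, χ, z))) := by
  have hτ1 : τ 1 = 0 := by
    have := hτ 1 1
    rw [one_mul] at this
    exact (left_eq_add.mp this)
  have hτinv : ∀ t : Λ, τ t⁻¹ = -τ t := by
    intro t
    have h := hτ t⁻¹ t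
    rw [inv_mul_cancel, hτ1] at h
    exact eq_neg_of_add_eq_zero_left h.symm
  have key : ∀ w : Circle, (starRingEnd ℂ) (w : ℂ) * (w : ℂ) = 1 := by
    intro w
    rw [mul_comm, Complex.mul_conj, Circle.normSq_coe, Complex.ofReal_one]
  refine ⟨⟨?_, ?_, ?_⟩, ?_, ?_⟩
  · -- reflexivity
    intro x
    exact ⟨1, by simp [hτ1], rfl, by simp⟩
  · -- symmetry
    rintro x y ⟨t, h1, h2, h3⟩
    refine ⟨t⁻¹, ?_, h2.symm, ?_⟩
    · rw [h1, hτinv]; abel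
    · rw [h3, h2, ← mul_assoc, ← map_mul, ← Circle.coe_mul, ← map_mul, inv_mul_cancel,
        map_one, Circle.coe_one, map_one, one_mul]
  · -- transitivity
    rintro x y zz ⟨t, h1, h2, h3⟩ ⟨s, k1, k2, k3⟩
    refine ⟨t * s, ?_, k2.trans h2, ?_⟩
    · rw [k1, h1, hτ]; abel
    · rw [k3, h2, h3, map_mul, Circle.coe_mul, map_mul]; ring
  · -- the twisted action descends
    rintro g x y ⟨t, h1, h2, h3⟩
    have hinv : (MulAut.conjNormal g⁻¹) ((MulAut.conjNormal g) t) = t := by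
      ext
      rw [MulAut.conjNormal_apply, MulAut.conjNormal_apply]
      group
    refine ⟨MulAut.conjNormal g t, ?_, ?_, ?_⟩
    · simp only [PoincareAct]
      rw [h1, ← hact t x.1, ← mul_smul, ← hact _ (g • x.1), ← mul_smul]
      congr 1
      rw [MulAut.conjNormal_apply]
      group
    · simp only [PoincareAct]
      rw [h2]
    · simp only [PoincareAct]
      by_cases hg : φ g = 0
      · rw [if_pos hg, if_pos hg, h3]
        simp only [rhoHat, if_pos hg, MonoidHom.comp_apply, MulEquiv.coe_toMonoidHom, hinv]
      · rw [if_neg hg, if_neg hg, h3, map_mul]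
        simp only [rhoHat, if_neg hg, MonoidHom.inv_apply, MonoidHom.comp_apply,
          MulEquiv.coe_toMonoidHom, hinv, Circle.coe_inv_eq_conj, Complex.conj_conj]
  · -- the action of `t ∈ Λ` is multiplication by `χ(t)`
    intro t v χ z
    refine ⟨t, ?_, ?_, ?_⟩
    · exact hact t v
    · show rhoHat Λ φ (t : G) χ = χ
      rw [rhoHat, if_pos (hφΛ t)]
      ext s
      have hcs : (MulAut.conjNormal ((t : G))⁻¹) s = s := by
        ext
        rw [MulAut.conjNormal_apply, inv_inv]
        have hc : (s : G) * (t : G) = (t : G) * (s : G) := by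
          exact_mod_cast congrArg (Subtype.val) (habel s t)
        rw [mul_assoc, hc, ← mul_assoc, inv_mul_cancel, one_mul]
      simp only [MonoidHom.comp_apply, MulEquiv.coe_toMonoidHom, hcs]
    · show (if φ ((t : G)) = 0 then z else _) = (starRingEnd ℂ) ((χ t : ℂ)) * ((χ t : ℂ) * z)
      rw [if_pos (hφΛ t), ← mul_assoc, key, one_mul]
end
end
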